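/- arXiv:2507.20770 — 4 statements merged into one kernel-verified Lean document; each statement's English description precedes it below -/
import Mathlib

section
/- Let D be a set, n ∈ ℕ, and suppose f_0, g_0, …, f_n, g_n ∈ B(D) and x_0, …, x_n ∈ D satisfy f_k(x_j) = g_k(x_j) for all j < k and |f_k(x_k) − g_k(x_k)| ≥ c for all k, for some c > 0. For ξ ∈ {0,1}^{n+1} define h_ξ = (1/(n+1)) Σ_{i=0}^n (ξ_i f_i + (1−ξ_i) g_i). Then for any distinct ξ, ξ' ∈ {0,1}^{n+1}, ‖h_ξ − h_{ξ'}‖_∞ ≥ c/(n+1). -/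
open scoped Pointwise

noncomputable section

/-- `B(D)`: the space of bounded complex-valued functions on `D` with sup-norm,
modeled as `ℓ^∞(D, ℂ)`. -/
abbrev BD (D : Type*) : Type _ := ↥(lp (fun _ : D => ℂ) ⊤)

/-- The `n`-th sampling number of `F` in `B(D)`. -/
def samplingNum {D : Type*} (F : Set (BD D)) (n : ℕ) : ℝ :=
  ⨅ (x : Fin n → D) (φ : (Fin n → ℂ) → BD D),
    ⨆ f ∈ F, ‖f - φ (fun k => (f : ∀ _ : D, ℂ) (x k))‖

/-- The `n`-th entropy number of `F` in a seminormed space `Y` (using `2^n` centers). -/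
def entropyNum {Y : Type*} [SeminormedAddCommGroup Y] (F : Set Y) (n : ℕ) : ℝ :=
  ⨅ (y : Fin (2 ^ n) → Y), ⨆ f ∈ F, ⨅ i, ‖f - y i‖

/-- The `n`-th inner entropy number of `F` (using `2^n + 1` points of `F`). -/
def innerEntropyNum {Y : Type*} [SeminormedAddCommGroup Y] (F : Set Y) (n : ℕ) : ℝ :=
  ⨆ (y : Fin (2 ^ n + 1) → Y) (_ : ∀ i, y i ∈ F),
    ⨅ p : {p : Fin (2 ^ n + 1) × Fin (2 ^ n + 1) // p.1 ≠ p.2}, ‖y p.1.1 - y p.1.2‖ / 2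

/-- The (global) diameter of information of `F` in `B(D)`. -/
def diamInfo {D : Type*} (F : Set (BD D)) (n : ℕ) : ℝ :=
  ⨅ (x : Fin n → D), ⨆ f ∈ F, ⨆ g ∈ F,
    ⨆ (_ : ∀ k, (f : ∀ _ : D, ℂ) (x k) = (g : ∀ _ : D, ℂ) (x k)), ‖f - g‖

theorem exists_first_ne_of_ne {ι β : Type*} [LinearOrder ι] [WellFoundedLT ι] {ξ ξ' : ι → β}
    (hne : ξ ≠ ξ') : ∃ k, ξ k ≠ ξ' k ∧ ∀ i < k, ξ i = ξ' i := by
  obtain ⟨k, hk, hmin⟩ := wellFounded_lt.has_min {i | ξ i ≠ ξ' i} (Function.ne_iff.1 hne)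
  exact ⟨k, hk, fun i hi => not_not.1 fun h => hmin i h hi⟩

theorem norm_ite_sub_ite_of_ne {E : Type*} [SeminormedAddGroup E] (a b : E) {p q : Bool}
    (hpq : p ≠ q) : ‖(if p then a else b) - (if q then a else b)‖ = ‖a - b‖ := by
  cases p <;> cases q <;> simp_all [norm_sub_rev]

theorem norm_sum_ite_sub_sum_ite {ι E : Type*} [Fintype ι] [LinearOrder ι]
    [SeminormedAddCommGroup E] (a b : ι → E) {ξ ξ' : ι → Bool} {k : ι} (hk : ξ k ≠ ξ' k)
    (hlt : ∀ i < k, ξ i = ξ' i) (hgt : ∀ i, k < i → a i = b i) :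
    ‖(∑ i, if ξ i then a i else b i) - ∑ i, if ξ' i then a i else b i‖ = ‖a k - b k‖ := by
  rw [← Finset.sum_sub_distrib, Finset.sum_eq_single k, norm_ite_sub_ite_of_ne (a k) (b k) hk]
  · intro i _ hik
    rcases lt_or_gt_of_ne hik with hi | hi
    · simp [hlt i hi]
    · simp [hgt i hi]
  · simp

theorem convex_comb_separated_general {D : Type*} (n : ℕ) (f g : Fin (n + 1) → BD D)
    (x : Fin (n + 1) → D) (c : ℝ)
    (hagree : ∀ k j : Fin (n + 1), j < k →
      (f k : ∀ _ : D, ℂ) (x j) = (g k : ∀ _ : D, ℂ) (x j))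
    (hsep : ∀ k, c ≤ ‖(f k : ∀ _ : D, ℂ) (x k) - (g k : ∀ _ : D, ℂ) (x k)‖)
    (ξ ξ' : Fin (n + 1) → Bool) (hne : ξ ≠ ξ') :
    c / ((n : ℝ) + 1) ≤
      ‖(((n : ℝ) + 1)⁻¹ • ∑ i, if ξ i then f i else g i) -
        (((n : ℝ) + 1)⁻¹ • ∑ i, if ξ' i then f i else g i)‖ := by
  obtain ⟨k, hk, hlt⟩ := exists_first_ne_of_ne hne
  set u : BD D := (((n : ℝ) + 1)⁻¹ • ∑ i, if ξ i then f i else g i) -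
    (((n : ℝ) + 1)⁻¹ • ∑ i, if ξ' i then f i else g i)
  have hu : (u : ∀ _ : D, ℂ) (x k) = ((n : ℝ) + 1)⁻¹ •
      ((∑ i, if ξ i then (f i : ∀ _ : D, ℂ) (x k) else (g i : ∀ _ : D, ℂ) (x k)) -
        ∑ i, if ξ' i then (f i : ∀ _ : D, ℂ) (x k) else (g i : ∀ _ : D, ℂ) (x k)) := by
    simp only [u, lp.coeFn_sub, lp.coeFn_smul, lp.coeFn_sum, Pi.sub_apply, Pi.smul_apply,
      Finset.sum_apply, smul_sub, apply_ite (fun h : BD D => (h : ∀ _ : D, ℂ)),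
      apply_ite (fun h : ∀ _ : D, ℂ => h (x k))]
  calc c / ((n : ℝ) + 1)
      ≤ ((n : ℝ) + 1)⁻¹ * ‖(f k : ∀ _ : D, ℂ) (x k) - (g k : ∀ _ : D, ℂ) (x k)‖ := by
        rw [div_eq_inv_mul]; gcongr; exact hsep k
    _ = ‖(u : ∀ _ : D, ℂ) (x k)‖ := by
        rw [hu, norm_smul, norm_sum_ite_sub_sum_ite _ _ hk hlt fun i hi => hagree i k hi,
          norm_inv, Real.norm_of_nonneg (by positivity)]
    _ ≤ ‖u‖ := lp.norm_apply_le_norm ENNReal.top_ne_zero u (x k)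

theorem convex_comb_separated {D : Type*} (n : ℕ) (f g : Fin (n + 1) → BD D)
    (x : Fin (n + 1) → D) (c : ℝ) (hc : 0 < c)
    (hagree : ∀ k j : Fin (n + 1), j < k →
      (f k : ∀ _ : D, ℂ) (x j) = (g k : ∀ _ : D, ℂ) (x j))
    (hsep : ∀ k, c ≤ ‖(f k : ∀ _ : D, ℂ) (x k) - (g k : ∀ _ : D, ℂ) (x k)‖)
    (ξ ξ' : Fin (n + 1) → Bool) (hne : ξ ≠ ξ') :
    c / ((n : ℝ) + 1) ≤
      ‖(((n : ℝ) + 1)⁻¹ • ∑ i, if ξ i then f i else g i) -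
        (((n : ℝ) + 1)⁻¹ • ∑ i, if ξ' i then f i else g i)‖ :=
  convex_comb_separated_general n f g x c hagree hsep ξ ξ' hne
end
end

section
/- Let D be a set and F ⊆ B(D) convex. For any n points x_0,…,x_n ∈ D chosen as in the induction with pairs (f_k, g_k) ∈ F satisfying f_k(x_j)=g_k(x_j) for j<k and |f_k(x_k)−g_k(x_k)| ≥ ρ−δ, the set H = { (1/(n+1)) Σ_{i=0}^n (ξ_i f_i + (1−ξ_i) g_i) : ξ ∈ {0,1}^{n+1} } is contained in F and has exactly 2^{n+1} elements, provided ρ − δ > 0. -/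
open scoped Pointwise

noncomputable section

/-!
Evaluating at the points `x j` makes the family triangular: `f k` and `g k` agree at every `x j`
with `j < k` but differ at `x k`. So if two choice vectors `ξ ≠ ξ'` first differ at `k`, the two
sums differ at `x k` by exactly `± (f k - g k) (x k) ≠ 0`, and the `2 ^ (n + 1)` averages are
distinct. Each of them is an equal-weight convex combination of points of `F`.
-/

theorem Convex.inv_card_smul_sum_mem {𝕜 E ι : Type*} [Field 𝕜] [LinearOrder 𝕜]
    [IsStrictOrderedRing 𝕜] [AddCommGroup E] [Module 𝕜 E] [Fintype ι] [Nonempty ι]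
    {s : Set E} (hs : Convex 𝕜 s) {z : ι → E} (hz : ∀ i, z i ∈ s) :
    (Fintype.card ι : 𝕜)⁻¹ • ∑ i, z i ∈ s := by
  rw [Finset.smul_sum]
  refine hs.sum_mem (fun _ _ => by positivity) ?_ fun i _ => hz i
  simp [Finset.card_univ]

section Triangular

variable {ι E G : Type*} [LinearOrder ι] [Fintype ι] [AddCommGroup E] [AddCommGroup G]
  {φ : ι → E →+ G} {f g : ι → E}

theorem exists_min_ne_of_ne {α : Type*} {ξ ξ' : ι → α} (h : ξ ≠ ξ') :
    ∃ k, ξ k ≠ ξ' k ∧ ∀ j < k, ξ j = ξ' j := by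
  obtain ⟨i, hi⟩ := Function.ne_iff.mp h
  obtain ⟨k, hk, hmin⟩ := wellFounded_lt.has_min {j | ξ j ≠ ξ' j} ⟨i, hi⟩
  exact ⟨k, hk, fun j hj => by_contra fun hne => hmin j hne hj⟩

theorem injective_sum_ite_of_triangular (hagree : ∀ k j, j < k → φ j (f k) = φ j (g k))
    (hsep : ∀ k, φ k (f k) ≠ φ k (g k)) :
    Function.Injective (fun ξ : ι → Bool => ∑ i, if ξ i then f i else g i) := by
  intro ξ ξ' heq
  by_contra hne
  obtain ⟨k, hk, hmin⟩ := exists_min_ne_of_ne hne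
  have hterm : ∀ i ≠ k,
      φ k (if ξ i then f i else g i) - φ k (if ξ' i then f i else g i) = 0 := by
    intro i hik
    rcases lt_or_gt_of_ne hik with hlt | hgt
    · rw [hmin i hlt, sub_self]
    · rw [sub_eq_zero, apply_ite (φ k), apply_ite (φ k), hagree i k hgt]
      simp
  have hdiff : φ k (if ξ k then f k else g k) - φ k (if ξ' k then f k else g k) = 0 := by
    rw [← Fintype.sum_eq_single k hterm, Finset.sum_sub_distrib, ← map_sum, ← map_sum]
    exact sub_eq_zero.mpr (congrArg (φ k) heq)
  cases hξ : ξ k <;> cases hξ' : ξ' k <;> simp only [hξ, hξ'] at hk hdiff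
  · exact hk rfl
  · exact hsep k (sub_eq_zero.mp hdiff).symm
  · exact hsep k (sub_eq_zero.mp hdiff)
  · exact hk rfl

end Triangular

theorem convex_comb_set_card {D : Type*} (F : Set (BD D)) (hconv : Convex ℝ F) (n : ℕ)
    (f g : Fin (n + 1) → BD D) (x : Fin (n + 1) → D) (ρ δ : ℝ) (hpos : 0 < ρ - δ)
    (hmem : ∀ k, f k ∈ F ∧ g k ∈ F)
    (hagree : ∀ k j : Fin (n + 1), j < k →
      (f k : ∀ _ : D, ℂ) (x j) = (g k : ∀ _ : D, ℂ) (x j))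
    (hsep : ∀ k, ρ - δ ≤ ‖(f k : ∀ _ : D, ℂ) (x k) - (g k : ∀ _ : D, ℂ) (x k)‖) :
    (Set.range (fun ξ : Fin (n + 1) → Bool =>
        ((n : ℝ) + 1)⁻¹ • ∑ i, if ξ i then f i else g i) ⊆ F) ∧
    (Set.range (fun ξ : Fin (n + 1) → Bool =>
        ((n : ℝ) + 1)⁻¹ • ∑ i, if ξ i then f i else g i)).ncard = 2 ^ (n + 1) := by
  set h : (Fin (n + 1) → Bool) → BD D := fun ξ =>
    ((n : ℝ) + 1)⁻¹ • ∑ i, if ξ i then f i else g i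
  let ev : Fin (n + 1) → BD D →+ ℂ := fun j =>
    (Pi.evalAddMonoidHom (fun _ : D => ℂ) (x j)).comp (lp.coeFnAddMonoidHom _ ⊤)
  have hne : ∀ k, ev k (f k) ≠ ev k (g k) := fun k heq =>
    (hpos.trans_le (hsep k)).ne' (norm_eq_zero.mpr (sub_eq_zero.mpr heq))
  have hinj : Function.Injective h :=
    (smul_right_injective (BD D) (r := ((n : ℝ) + 1)⁻¹) (by positivity)).comp
      (injective_sum_ite_of_triangular (φ := ev) hagree hne)
  refine ⟨?_, by rw [Set.ncard_range_of_injective hinj]; simp⟩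
  rintro _ ⟨ξ, rfl⟩
  have hcard : (Fintype.card (Fin (n + 1)) : ℝ) = n + 1 := by simp
  simpa only [hcard] using hconv.inv_card_smul_sum_mem fun i =>
    show (if ξ i then f i else g i) ∈ F by split_ifs <;> simp [hmem i]
end
end

section
/- Let D be a set and F ⊆ B(D) be convex and compact. Then for every n, the diameter of information satisfies g_n^0(F, B(D)) ≤ 2(n+1)·ε_n(F, B(D)). -/
open scoped Pointwise

noncomputable section

/-! If `c < g_n^0(F)`, any `n` nodes leave two functions of `F` that agree there but differ by
more than `c` at some further point; adding that point as a node and repeating yields pairs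
`(f_j, g_j)` in `F` and nodes `x_j`, `j ≤ n`, with `|f_j(x_j) - g_j(x_j)| > c` and `f_j = g_j` at
all earlier nodes. For `ξ ∈ {0,1}^{n+1}` let `h_ξ ∈ F` average `f_j` (where `ξ_j = 1`) and `g_j`
(where `ξ_j = 0`). At the node of the first index where `ξ ≠ η` only one summand of `h_ξ - h_η`
survives, so `‖h_ξ - h_η‖ > c / (n+1)`. These `2^(n+1)` points of `F` cannot lie in `2^n` balls of
radius `c / (2(n+1))`, hence `c ≤ 2(n+1) ε_n(F)`. -/

open Bornology

lemma Real.exists_lt_of_lt_iSup {ι : Sort*} {f : ι → ℝ} {c : ℝ} (hc : 0 ≤ c)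
    (h : c < ⨆ i, f i) : ∃ i, c < f i := by
  contrapose! h
  exact Real.iSup_le h hc

lemma lp.exists_lt_norm_apply {α : Type*} {E : α → Type*} [∀ i, NormedAddCommGroup (E i)]
    {u : lp E ⊤} {c : ℝ} (hc : 0 ≤ c) (h : c < ‖u‖) : ∃ i, c < ‖u i‖ := by
  contrapose! h
  exact lp.norm_le_of_forall_le hc h

section Entropy

variable {Y : Type*} [SeminormedAddCommGroup Y]

lemma entropyNum_nonneg (F : Set Y) (n : ℕ) : 0 ≤ entropyNum F n :=
  Real.iInf_nonneg fun _ => Real.iSup_nonneg fun _ => Real.iSup_nonneg fun _ =>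
    Real.iInf_nonneg fun _ => norm_nonneg _

lemma iInf_norm_sub_le_iSup_iInf_norm_sub {F : Set Y} (hF : IsBounded F) {ι : Type*}
    [Nonempty ι] (y : ι → Y) {f : Y} (hf : f ∈ F) :
    ⨅ i, ‖f - y i‖ ≤ ⨆ g ∈ F, ⨅ i, ‖g - y i‖ := by
  obtain ⟨R, hR⟩ := isBounded_iff_forall_norm_le.mp hF
  obtain ⟨i₀⟩ := ‹Nonempty ι›
  refine le_ciSup₂ (f := fun g (_ : g ∈ F) => ⨅ i, ‖g - y i‖) ⟨R + ‖y i₀‖, ?_⟩ f hf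
  simp only [mem_upperBounds, Set.mem_iUnion, Set.mem_range]
  rintro _ ⟨g, hg, rfl⟩
  calc ⨅ i, ‖g - y i‖ ≤ ‖g - y i₀‖ := ciInf_le ⟨0, by simp [lowerBounds]⟩ i₀
    _ ≤ ‖g‖ + ‖y i₀‖ := norm_sub_le _ _
    _ ≤ R + ‖y i₀‖ := by grw [hR g hg]

lemma le_entropyNum_of_pairwise_le_norm_sub {F : Set Y} (hF : IsBounded F) {ι : Type*}
    [Fintype ι] {z : ι → Y} (hz : ∀ a, z a ∈ F) {n : ℕ} (hcard : 2 ^ n < Fintype.card ι)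
    {r : ℝ} (hsep : Pairwise fun a b => 2 * r ≤ ‖z a - z b‖) : r ≤ entropyNum F n := by
  by_contra! hr
  obtain ⟨y, hy⟩ := exists_lt_of_ciInf_lt hr
  have hnear (a : ι) : ∃ i, ‖z a - y i‖ < r :=
    exists_lt_of_ciInf_lt ((iInf_norm_sub_le_iSup_iInf_norm_sub hF y (hz a)).trans_lt hy)
  choose φ hφ using hnear
  obtain ⟨a, b, hab, hφab⟩ :=
    Fintype.exists_ne_map_eq_of_card_lt φ (by simpa only [Fintype.card_fin] using hcard)
  have ha := hφ a
  rw [hφab] at ha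
  have := norm_sub_le_norm_sub_add_norm_sub (z a) (y (φ b)) (z b)
  rw [norm_sub_rev (y _)] at this
  linarith [hsep hab, hφ b]

end Entropy

section DiamInfo

variable {D : Type*} {F : Set (BD D)} {n : ℕ} {c : ℝ}

lemma diamInfo_le_iSup (x : Fin n → D) :
    diamInfo F n ≤ ⨆ f ∈ F, ⨆ g ∈ F, ⨆ (_ : ∀ k, f (x k) = g (x k)), ‖f - g‖ :=
  ciInf_le ⟨0, Set.forall_mem_range.2 fun _ => Real.iSup_nonneg fun _ => Real.iSup_nonneg
    fun _ => Real.iSup_nonneg fun _ => Real.iSup_nonneg fun _ => Real.iSup_nonneg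
    fun _ => norm_nonneg _⟩ x

lemma exists_pair_of_lt_diamInfo (hc : 0 ≤ c) (h : c < diamInfo F n) (x : Fin n → D) :
    ∃ f ∈ F, ∃ g ∈ F, (∀ k, f (x k) = g (x k)) ∧ c < ‖f - g‖ := by
  obtain ⟨f, h⟩ := Real.exists_lt_of_lt_iSup hc (h.trans_le (diamInfo_le_iSup x))
  obtain ⟨hf, h⟩ := Real.exists_lt_of_lt_iSup hc h
  obtain ⟨g, h⟩ := Real.exists_lt_of_lt_iSup hc h
  obtain ⟨hg, h⟩ := Real.exists_lt_of_lt_iSup hc h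
  obtain ⟨hfg, h⟩ := Real.exists_lt_of_lt_iSup hc h
  exact ⟨f, hf, g, hg, hfg, h⟩

lemma nonempty_of_lt_diamInfo (hc : 0 ≤ c) (h : c < diamInfo F n) : Nonempty D := by
  by_contra! hD
  refine (h.trans_le ?_).not_ge hc
  exact Real.iInf_nonpos fun _ => Real.iSup_nonpos fun _ => Real.iSup_nonpos fun _ =>
    Real.iSup_nonpos fun _ => Real.iSup_nonpos fun _ => Real.iSup_nonpos fun _ =>
    lp.norm_le_of_forall_le le_rfl isEmptyElim

end DiamInfo

structure SeparatedStaircase {D : Type*} (F : Set (BD D)) (c : ℝ) (m : ℕ) where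
  f : Fin m → BD D
  g : Fin m → BD D
  x : Fin m → D
  f_mem : ∀ j, f j ∈ F
  g_mem : ∀ j, g j ∈ F
  lt_norm_sub : ∀ j, c < ‖f j (x j) - g j (x j)‖
  apply_eq : ∀ i j, i < j → f j (x i) = g j (x i)

namespace SeparatedStaircase

variable {D : Type*} {F : Set (BD D)} {c : ℝ} {m n : ℕ}

def nil : SeparatedStaircase F c 0 :=
  ⟨Fin.elim0, Fin.elim0, Fin.elim0, (·.elim0), (·.elim0), (·.elim0), fun _ j => j.elim0⟩

def snoc (S : SeparatedStaircase F c m) {f g : BD D} (hf : f ∈ F) (hg : g ∈ F) {z : D}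
    (hz : c < ‖f z - g z‖) (hfg : ∀ i, f (S.x i) = g (S.x i)) :
    SeparatedStaircase F c (m + 1) where
  f := Fin.snoc S.f f
  g := Fin.snoc S.g g
  x := Fin.snoc S.x z
  f_mem := Fin.lastCases (by simpa using hf) fun j => by simpa using S.f_mem j
  g_mem := Fin.lastCases (by simpa using hg) fun j => by simpa using S.g_mem j
  lt_norm_sub := Fin.lastCases (by simpa using hz) fun j => by simpa using S.lt_norm_sub j
  apply_eq i j hij := by
    obtain ⟨i, rfl⟩ := Fin.exists_castSucc_eq.mpr (Fin.ne_last_of_lt hij)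
    induction j using Fin.lastCases with
    | last => simpa using hfg i
    | cast j => simpa using S.apply_eq i j (by simpa using hij)

lemma nonempty [Nonempty D] (hc : 0 ≤ c)
    (hpair : ∀ x : Fin n → D, ∃ f ∈ F, ∃ g ∈ F, (∀ k, f (x k) = g (x k)) ∧ c < ‖f - g‖) :
    ∀ m ≤ n + 1, Nonempty (SeparatedStaircase F c m)
  | 0, _ => ⟨nil⟩
  | m + 1, hm => by
    obtain ⟨S⟩ := nonempty hc hpair m (by omega)
    have hmn : m ≤ n := by omega
    let X : Fin n → D := Function.extend (Fin.castLE hmn) S.x fun _ => Classical.arbitrary D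
    have hX (i : Fin m) : X (Fin.castLE hmn i) = S.x i :=
      (Fin.castLE_injective hmn).extend_apply _ _ i
    obtain ⟨f, hf, g, hg, hfg, hnorm⟩ := hpair X
    obtain ⟨z, hz⟩ := lp.exists_lt_norm_apply hc hnorm
    refine ⟨S.snoc hf hg (z := z) (by simpa using hz) fun i => ?_⟩
    simpa [hX] using hfg (Fin.castLE hmn i)

variable (S : SeparatedStaircase F c m)

def pick (ξ : Fin m → Bool) (j : Fin m) : BD D := if ξ j then S.f j else S.g j

def avg (ξ : Fin m → Bool) : BD D := ∑ j, (m : ℝ)⁻¹ • S.pick ξ j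

lemma avg_mem [NeZero m] (hF : Convex ℝ F) (ξ : Fin m → Bool) : S.avg ξ ∈ F := by
  refine hF.sum_mem (fun _ _ => by positivity) ?_ fun j _ => ?_
  · simp only [Finset.sum_const, Finset.card_univ, Fintype.card_fin, nsmul_eq_mul]
    exact mul_inv_cancel₀ (Nat.cast_ne_zero.2 (NeZero.ne m))
  · unfold pick
    split_ifs
    exacts [S.f_mem j, S.g_mem j]

lemma pick_apply_of_lt (ξ : Fin m → Bool) {i j : Fin m} (hij : i < j) :
    S.pick ξ j (S.x i) = S.f j (S.x i) := by
  unfold pick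
  split_ifs
  exacts [rfl, (S.apply_eq i j hij).symm]

lemma norm_pick_sub_pick_apply {ξ η : Fin m → Bool} {j : Fin m} (h : ξ j ≠ η j) :
    ‖S.pick ξ j (S.x j) - S.pick η j (S.x j)‖ = ‖S.f j (S.x j) - S.g j (S.x j)‖ := by
  unfold pick
  cases hξ : ξ j <;> cases hη : η j <;> simp_all [norm_sub_rev]

/-- Below the first index `j₀` where `ξ` and `η` differ the same functions are picked, and above
it `f j` and `g j` agree at `x j₀`. -/
lemma avg_sub_avg_apply {ξ η : Fin m → Bool} {j₀ : Fin m} (hlt : ∀ j < j₀, ξ j = η j) :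
    (S.avg ξ - S.avg η) (S.x j₀) =
      (m : ℝ)⁻¹ • (S.pick ξ j₀ (S.x j₀) - S.pick η j₀ (S.x j₀)) := by
  simp only [avg, lp.coeFn_sub, lp.coeFn_sum, lp.coeFn_smul, Pi.sub_apply, Finset.sum_apply,
    Pi.smul_apply, ← Finset.sum_sub_distrib, ← smul_sub]
  refine Finset.sum_eq_single j₀ (fun j _ hj => ?_) (by simp)
  rcases hj.lt_or_gt with hj | hj
  · simp [pick, hlt j hj]
  · simp [S.pick_apply_of_lt _ hj]

lemma lt_norm_avg_sub_avg {ξ η : Fin m → Bool} (h : ξ ≠ η) :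
    c / m < ‖S.avg ξ - S.avg η‖ := by
  obtain ⟨j₀, hj₀, hmin⟩ := WellFounded.has_min wellFounded_lt {j | ξ j ≠ η j}
    (Function.ne_iff.mp h)
  have hlt : ∀ j < j₀, ξ j = η j := fun j hj => by_contra fun hne => hmin j hne hj
  have hm : (0 : ℝ) < m := Nat.cast_pos.2 (Fin.pos j₀)
  calc c / m < ‖(S.avg ξ - S.avg η) (S.x j₀)‖ := by
        rw [S.avg_sub_avg_apply hlt, norm_smul, S.norm_pick_sub_pick_apply hj₀, norm_inv,
          RCLike.norm_natCast, div_eq_inv_mul]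
        exact mul_lt_mul_of_pos_left (S.lt_norm_sub j₀) (inv_pos.2 hm)
    _ ≤ ‖S.avg ξ - S.avg η‖ := lp.norm_apply_le_norm ENNReal.top_ne_zero _ _

end SeparatedStaircase

theorem diamInfo_le_entropy {D : Type*} (F : Set (BD D))
    (hconv : Convex ℝ F) (hcomp : IsCompact F) (n : ℕ) :
    diamInfo F n ≤ 2 * ((n : ℝ) + 1) * entropyNum F n := by
  refine le_of_forall_lt_imp_le_of_dense fun c hc => ?_
  have hE := entropyNum_nonneg F n
  rcases lt_or_ge c 0 with hc0 | hc0
  · nlinarith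
  have : Nonempty D := nonempty_of_lt_diamInfo hc0 hc
  obtain ⟨S⟩ := SeparatedStaircase.nonempty hc0 (exists_pair_of_lt_diamInfo hc0 hc) (n + 1) le_rfl
  have hcard : 2 ^ n < Fintype.card (Fin (n + 1) → Bool) := by
    simpa using Nat.pow_lt_pow_right one_lt_two n.lt_succ_self
  have hr := le_entropyNum_of_pairwise_le_norm_sub hcomp.isBounded (S.avg_mem hconv) hcard
    (r := c / (n + 1) / 2) fun ξ η h => by
      rw [mul_div_cancel₀ _ two_ne_zero]
      exact_mod_cast (S.lt_norm_avg_sub_avg h).le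
  rw [div_le_iff₀ two_pos, div_le_iff₀ (by positivity)] at hr
  linarith
end
end

section
/- Let D be a set and F ⊆ B(D) convex and compact. If ε_n(F, B(D)) = 0 for some n, then g_n(F, B(D)) = 0; i.e., F can be recovered exactly (in the worst case) from n function values. -/
open scoped Pointwise

noncomputable section

theorem sampling_eq_zero_of_entropy_eq_zero {D : Type*} (F : Set (BD D))
    (hconv : Convex ℝ F) (hcomp : IsCompact F) (n : ℕ)
    (hε : entropyNum F n = 0) : samplingNum F n = 0 := by
  -- Step 1: F is a subsingleton
  have hsub : F.Subsingleton := by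
    intro f hf g hg
    by_contra hne
    have hc : (0:ℝ) < ‖g - f‖ := by
      rw [norm_pos_iff, sub_ne_zero]; exact fun h => hne h.symm
    set N : ℕ := 2 ^ n with hN
    have hNpos : (0:ℝ) < N := by positivity
    haveI : Nonempty (Fin N) := ⟨⟨0, by positivity⟩⟩
    set δ : ℝ := ‖g - f‖ / N with hδdef
    have hδ : 0 < δ := div_pos hc hNpos
    set p : Fin (N+1) → BD D := fun i => f + (((i:ℕ):ℝ)/N) • (g - f) with hp
    have hpF : ∀ i, p i ∈ F := by
      intro i
      have ht0 : (0:ℝ) ≤ ((i:ℕ):ℝ)/N := by positivity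
      have ht1 : ((i:ℕ):ℝ)/N ≤ 1 := by
        rw [div_le_one hNpos]
        exact_mod_cast Nat.lt_succ_iff.mp i.isLt
      have h2 : (1 - ((i:ℕ):ℝ)/N) • f + (((i:ℕ):ℝ)/N) • g ∈ F :=
        hconv hf hg (by linarith) ht0 (by ring)
      convert h2 using 1
      module
    obtain ⟨M, hM⟩ : ∃ M, ∀ x ∈ F, ‖x‖ ≤ M := hcomp.isBounded.exists_norm_le
    haveI : Nonempty (BD D) := ⟨0⟩
    have hlow : δ/2 ≤ entropyNum F n := by
      apply le_ciInf
      intro y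
      by_contra hS
      push_neg at hS
      have hbdd : BddAbove (Set.range fun f : BD D => ⨆ _ : f ∈ F, ⨅ i, ‖f - y i‖) := by
        refine ⟨max 0 (M + ‖y (Classical.arbitrary (Fin N))‖), ?_⟩
        rintro _ ⟨f', rfl⟩
        apply Real.iSup_le _ (le_max_left _ _)
        intro hf'
        refine le_max_of_le_right ?_
        refine le_trans (ciInf_le ⟨0, ?_⟩ (Classical.arbitrary (Fin N))) ?_
        · rintro _ ⟨j, rfl⟩; positivity
        · exact le_trans (norm_sub_le _ _) (by gcongr; exact hM _ hf')
      have key : ∀ i : Fin (N+1), ∃ j, ‖p i - y j‖ < δ/2 := by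
        intro i
        have h0 : (⨆ _ : p i ∈ F, ⨅ j, ‖p i - y j‖) ≤ ⨆ f ∈ F, ⨅ j, ‖f - y j‖ :=
          le_ciSup hbdd (p i)
        rw [ciSup_pos (hpF i)] at h0
        exact exists_lt_of_ciInf_lt (lt_of_le_of_lt h0 hS)
      choose j hj using key
      obtain ⟨i, i', hii, hjj⟩ := Fintype.exists_ne_map_eq_of_card_lt j (by simp only [Fintype.card_fin]; exact Nat.lt_succ_self N)
      have hdist : ‖p i - p i'‖ < δ := by
        calc ‖p i - p i'‖ = ‖(p i - y (j i)) - (p i' - y (j i'))‖ := by rw [hjj, sub_sub_sub_cancel_right]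
          _ ≤ ‖p i - y (j i)‖ + ‖p i' - y (j i')‖ := norm_sub_le _ _
          _ < δ/2 + δ/2 := add_lt_add (hj i) (hj i')
          _ = δ := by ring
      have heq : p i - p i' = ((((i:ℕ):ℝ) - ((i':ℕ):ℝ))/N) • (g - f) := by
        simp only [hp]; module
      have h1 : (1:ℝ) ≤ |((i:ℕ):ℝ) - ((i':ℕ):ℝ)| := by
        have hne' : (i:ℕ) ≠ (i':ℕ) := fun h => hii (Fin.ext h)
        have h2 : (1:ℤ) ≤ |((i:ℕ):ℤ) - ((i':ℕ):ℤ)| :=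
          Int.one_le_abs (sub_ne_zero.mpr (by exact_mod_cast hne'))
        calc (1:ℝ) ≤ ((|((i:ℕ):ℤ) - ((i':ℕ):ℤ)| : ℤ) : ℝ) := by exact_mod_cast h2
          _ = |((i:ℕ):ℝ) - ((i':ℕ):ℝ)| := by push_cast; rfl
      have hge : δ ≤ ‖p i - p i'‖ := by
        rw [heq, norm_smul, Real.norm_eq_abs, abs_div, abs_of_pos hNpos]
        calc δ = 1/N * ‖g - f‖ := by rw [hδdef]; ring
          _ ≤ |((i:ℕ):ℝ) - ((i':ℕ):ℝ)|/N * ‖g - f‖ := by gcongr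
      linarith
    rw [hε] at hlow; linarith
  -- Step 2: samplingNum = 0
  obtain ⟨f₀, hf₀⟩ : ∃ f₀ : BD D, ∀ f ∈ F, f = f₀ := by
    rcases F.eq_empty_or_nonempty with h | ⟨g, hg⟩
    · exact ⟨0, by simp [h]⟩
    · exact ⟨g, fun f hf => hsub hf hg⟩
  have hnonneg : ∀ (x : Fin n → D) (φ : (Fin n → ℂ) → BD D),
      0 ≤ ⨆ f ∈ F, ‖f - φ (fun k => (f : ∀ _ : D, ℂ) (x k))‖ := fun x φ =>
    Real.iSup_nonneg fun f => Real.iSup_nonneg fun _ => norm_nonneg _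
  have hge : 0 ≤ samplingNum F n :=
    Real.iInf_nonneg fun x => Real.iInf_nonneg fun φ => hnonneg x φ
  have hle : samplingNum F n ≤ 0 := by
    rcases isEmpty_or_nonempty (Fin n → D) with hD | hD
    · unfold samplingNum
      rw [Real.iInf_of_isEmpty]
    · obtain ⟨x⟩ := hD
      have hsup0 : (⨆ f ∈ F, ‖f - (fun _ : Fin n → ℂ => f₀) (fun k => (f : ∀ _ : D, ℂ) (x k))‖) ≤ 0 := by
        apply Real.iSup_le _ le_rfl
        intro f
        apply Real.iSup_le _ le_rfl
        intro hf
        rw [hf₀ f hf, sub_self, norm_zero]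
      have hstep : (⨅ (φ : (Fin n → ℂ) → BD D),
          ⨆ f ∈ F, ‖f - φ (fun k => (f : ∀ _ : D, ℂ) (x k))‖) ≤ 0 :=
        ciInf_le_of_le ⟨0, by rintro _ ⟨φ, rfl⟩; exact hnonneg x φ⟩ (fun _ => f₀) hsup0
      have hbb : BddBelow (Set.range fun x' : Fin n → D => ⨅ (φ : (Fin n → ℂ) → BD D),
          ⨆ f ∈ F, ‖f - φ (fun k => (f : ∀ _ : D, ℂ) (x' k))‖) := by
        refine ⟨0, ?_⟩
        rintro _ ⟨x', rfl⟩
        exact Real.iInf_nonneg fun φ => hnonneg x' φ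
      exact le_trans (ciInf_le hbb x) hstep
  linarith
end
end
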